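/- arXiv:1708.04044 — 4 statements merged into one kernel-verified Lean document; each statement's English description precedes it below -/
import Mathlib

section
/- Let f : ℝⁿ → ℝ be p-times continuously differentiable (p ≥ 2) with ‖∇ᵖf(x) − ∇ᵖf(y)‖ ≤ (p−1)!·L·‖x−y‖ for all x, y. Then for all x, s ∈ ℝⁿ, ‖∇f(x+s) − ∇_s T_p(x,s)‖ ≤ L·‖s‖^p, where ∇_s T_p(x,s) is the gradient with respect to s of the degree-p Taylor polynomial of f about x. -/
/-!
Differentiating the Taylor polynomial of `f` in the increment gives the Taylor polynomial of `Df`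
of one degree less; this uses the symmetry of iterated derivatives, which follows from the symmetry
of second derivatives. So the claim is the Taylor remainder bound
`‖h (x + s) - Tₘ h(x, s)‖ ≤ M ‖s‖ ^ (m + 1) / (m + 1)!` for `h = Df`, `m = p - 1`, `M = (p - 1)! L`,
valid whenever `Dᵐ h` is `M`-Lipschitz. That bound is proved by induction on `m`: along the segment
`t ↦ x + t • s` the remainder of `h` has as derivative the remainder of `Dh` applied to `s`, and the
inductive bound on the latter integrates to the bound on the former. The result is the sharper
bound `L ‖s‖ ^ p / p`.
-/

/-- The degree-`p` Taylor polynomial of `f` at `x`, evaluated at increment `s`. -/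
noncomputable def taylorP {n : ℕ} (p : ℕ) (f : EuclideanSpace ℝ (Fin n) → ℝ)
    (x s : EuclideanSpace ℝ (Fin n)) : ℝ :=
  ∑ j ∈ Finset.range (p + 1),
    (1 / (j.factorial : ℝ)) * iteratedFDeriv ℝ j f x (fun _ => s)

open Finset Nat

theorem norm_image_one_le_of_norm_deriv_le_mul_pow {G : Type*} [NormedAddCommGroup G]
    [NormedSpace ℝ G] {r r' : ℝ → G} {C : ℝ} {k : ℕ} (hr : ∀ t, HasDerivAt r (r' t) t)
    (hr₀ : r 0 = 0) (hle : ∀ t ∈ Set.Ico (0 : ℝ) 1, ‖r' t‖ ≤ C * t ^ k) :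
    ‖r 1‖ ≤ C / (k + 1) := by
  have hbound : ∀ t : ℝ, HasDerivAt (fun t => C / (k + 1) * t ^ (k + 1)) (C * t ^ k) t := by
    intro t
    refine ((hasDerivAt_pow (k + 1) t).const_mul (C / (k + 1))).congr_deriv ?_
    push_cast
    field_simp
  simpa using image_norm_le_of_norm_deriv_right_le_deriv_boundary
    (fun t _ => (hr t).continuousAt.continuousWithinAt) (fun t _ => (hr t).hasDerivWithinAt)
    (by simp [hr₀]) hbound hle (Set.right_mem_Icc.2 zero_le_one)

universe u

variable {E F : Type u} [NormedAddCommGroup E] [NormedSpace ℝ E]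
  [NormedAddCommGroup F] [NormedSpace ℝ F]

theorem iteratedFDeriv_fderiv_fderiv_apply_comm {g : E → F} (hg : ContDiff ℝ 2 g) (n : ℕ) (x : E)
    (v : Fin n → E) (a b : E) :
    iteratedFDeriv ℝ n (fderiv ℝ (fderiv ℝ g)) x v a b
      = iteratedFDeriv ℝ n (fderiv ℝ (fderiv ℝ g)) x v b a := by
  let flip : (E →L[ℝ] E →L[ℝ] F) ≃L[ℝ] (E →L[ℝ] E →L[ℝ] F) :=
    (ContinuousLinearMap.flipₗᵢ ℝ E E F).toContinuousLinearEquiv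
  have hsymm : flip ∘ fderiv ℝ (fderiv ℝ g) = fderiv ℝ (fderiv ℝ g) := by
    funext y
    ext a b
    exact (hg.contDiffAt.isSymmSndFDerivAt (by simp)).eq b a
  have hcomm := ContinuousLinearEquiv.iteratedFDeriv_comp_left (𝕜 := ℝ)
    (G := E →L[ℝ] E →L[ℝ] F) (f := fderiv ℝ (fderiv ℝ g)) (x := x) (i := n) flip
  rw [hsymm] at hcomm
  exact congrArg (fun T => T v b a) hcomm.symm

theorem iteratedFDeriv_succ_update_last (g : E → F) (n : ℕ) (x s u : E) :
    iteratedFDeriv ℝ (n + 1) g x (Function.update (fun _ => s) (Fin.last n) u)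
      = iteratedFDeriv ℝ n (fderiv ℝ g) x (fun _ => s) u := by
  rw [iteratedFDeriv_succ_apply_right, Fin.init_update_last, Function.update_self]
  rfl

theorem iteratedFDeriv_succ_update_const {n : ℕ} {g : E → F} (hg : ContDiff ℝ (n + 1) g)
    (x s u : E) (i : Fin (n + 1)) :
    iteratedFDeriv ℝ (n + 1) g x (Function.update (fun _ => s) i u)
      = iteratedFDeriv ℝ n (fderiv ℝ g) x (fun _ => s) u := by
  induction n generalizing F with
  | zero =>
    obtain rfl : i = Fin.last 0 := Fin.ext (by omega)
    exact iteratedFDeriv_succ_update_last g 0 x s u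
  | succ n ih =>
    cases i using Fin.lastCases with
    | last => exact iteratedFDeriv_succ_update_last g _ x s u
    | cast i =>
      have hg' : ContDiff ℝ (n + 1) (fderiv ℝ g) := hg.fderiv_right (by norm_cast)
      calc iteratedFDeriv ℝ (n + 1 + 1) g x (Function.update (fun _ => s) i.castSucc u)
          = iteratedFDeriv ℝ (n + 1) (fderiv ℝ g) x (Function.update (fun _ => s) i u) s := by
            rw [iteratedFDeriv_succ_apply_right, Function.update_of_ne (Fin.castSucc_lt_last i).ne']
            congr
            funext k
            simp [Fin.init, Function.update_apply]
        _ = iteratedFDeriv ℝ n (fderiv ℝ (fderiv ℝ g)) x (fun _ => s) u s := by rw [ih hg']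
        _ = iteratedFDeriv ℝ n (fderiv ℝ (fderiv ℝ g)) x (fun _ => s) s u :=
            iteratedFDeriv_fderiv_fderiv_apply_comm (hg.of_le (by norm_cast; omega)) n x _ u s
        _ = iteratedFDeriv ℝ (n + 1) (fderiv ℝ g) x (fun _ => s) u := by
            rw [iteratedFDeriv_succ_apply_right]
            rfl

theorem hasFDerivAt_iteratedFDeriv_diag {n : ℕ} {g : E → F} (hg : ContDiff ℝ (n + 1) g)
    (x s : E) :
    HasFDerivAt (fun s => iteratedFDeriv ℝ (n + 1) g x (fun _ => s))
      ((n + 1) • iteratedFDeriv ℝ n (fderiv ℝ g) x (fun _ => s)) s := by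
  let diag : E →L[ℝ] (Fin (n + 1) → E) := ContinuousLinearMap.pi fun _ => .id ℝ E
  have h := ((iteratedFDeriv ℝ (n + 1) g x).hasFDerivAt (diag s)).comp s diag.hasFDerivAt
  refine h.congr_fderiv ?_
  ext u
  simp [diag, ContinuousMultilinearMap.linearDeriv_apply, iteratedFDeriv_succ_update_const hg]

noncomputable def taylorPoly (g : E → F) (m : ℕ) (x s : E) : F :=
  ∑ k ∈ range (m + 1), (k ! : ℝ)⁻¹ • iteratedFDeriv ℝ k g x (fun _ => s)

@[simp]
theorem taylorPoly_zero_right (g : E → F) (m : ℕ) (x : E) : taylorPoly g m x 0 = g x := by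
  simp [taylorPoly, sum_range_succ', ← Pi.zero_def]

theorem hasFDerivAt_taylorPoly {m : ℕ} {g : E → F} (hg : ContDiff ℝ (m + 1) g) (x s : E) :
    HasFDerivAt (taylorPoly g (m + 1) x) (taylorPoly (fderiv ℝ g) m x s) s := by
  have hterm : ∀ k ∈ range (m + 1), HasFDerivAt
      (fun s => ((k + 1) ! : ℝ)⁻¹ • iteratedFDeriv ℝ (k + 1) g x (fun _ => s))
      ((k ! : ℝ)⁻¹ • iteratedFDeriv ℝ k (fderiv ℝ g) x (fun _ => s)) s := by
    intro k hk
    have hkm : k + 1 ≤ m + 1 := by simpa using hk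
    refine ((hasFDerivAt_iteratedFDeriv_diag (hg.of_le (by exact_mod_cast hkm)) x s).fun_const_smul
      ((k + 1) ! : ℝ)⁻¹).congr_fderiv ?_
    rw [← Nat.cast_smul_eq_nsmul ℝ, smul_smul, Nat.factorial_succ]
    push_cast
    field_simp
  unfold taylorPoly
  simp_rw [sum_range_succ' _ (m + 1)]
  simpa using (HasFDerivAt.sum hterm).add_const (g x)

theorem norm_iteratedFDeriv_fderiv_sub (g : E → F) (n : ℕ) (y z : E) :
    ‖iteratedFDeriv ℝ n (fderiv ℝ g) y - iteratedFDeriv ℝ n (fderiv ℝ g) z‖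
      = ‖iteratedFDeriv ℝ (n + 1) g y - iteratedFDeriv ℝ (n + 1) g z‖ := by
  rw [iteratedFDeriv_succ_eq_comp_right, iteratedFDeriv_succ_eq_comp_right, Function.comp_apply,
    Function.comp_apply, ← LinearIsometryEquiv.map_sub, LinearIsometryEquiv.norm_map]

theorem hasDerivAt_sub_taylorPoly_segment {m : ℕ} {g : E → F} (hg : ContDiff ℝ (m + 1) g)
    (x s : E) (t : ℝ) :
    HasDerivAt (fun t : ℝ => g (x + t • s) - taylorPoly g (m + 1) x (t • s))
      ((fderiv ℝ g (x + t • s) - taylorPoly (fderiv ℝ g) m x (t • s)) s) t := by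
  have hline : HasDerivAt (fun t : ℝ => t • s) s t := by
    simpa using (hasDerivAt_id t).smul_const s
  have hpoly := (hasFDerivAt_taylorPoly hg x (t • s)).comp_hasDerivAt t hline
  exact ((hg.differentiable (by simp)).differentiableAt.hasFDerivAt.comp_hasDerivAt t
    (hline.const_add x)).sub hpoly

theorem norm_sub_taylorPoly_le {m : ℕ} {g : E → F} {M : ℝ} (hg : ContDiff ℝ m g)
    (hlip : ∀ y z, ‖iteratedFDeriv ℝ m g y - iteratedFDeriv ℝ m g z‖ ≤ M * ‖y - z‖) (x s : E) :
    ‖g (x + s) - taylorPoly g m x s‖ ≤ M * ‖s‖ ^ (m + 1) / (m + 1)! := by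
  induction m generalizing F s with
  | zero =>
    have h := hlip (x + s) x
    simp only [iteratedFDeriv_zero_eq_comp, Function.comp_apply, ← LinearIsometryEquiv.map_sub,
      LinearIsometryEquiv.norm_map, add_sub_cancel_left] at h
    simpa [taylorPoly] using h
  | succ m ih =>
    have hg' : ContDiff ℝ m (fderiv ℝ g) := hg.fderiv_right (by norm_cast)
    have hlip' : ∀ y z, ‖iteratedFDeriv ℝ m (fderiv ℝ g) y - iteratedFDeriv ℝ m (fderiv ℝ g) z‖
        ≤ M * ‖y - z‖ := fun y z => (norm_iteratedFDeriv_fderiv_sub g m y z).trans_le (hlip y z)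
    have hderiv_le : ∀ t ∈ Set.Ico (0 : ℝ) 1,
        ‖(fderiv ℝ g (x + t • s) - taylorPoly (fderiv ℝ g) m x (t • s)) s‖
          ≤ M * ‖s‖ ^ (m + 2) / (m + 1)! * t ^ (m + 1) := by
      rintro t ⟨ht, -⟩
      calc _ ≤ ‖fderiv ℝ g (x + t • s) - taylorPoly (fderiv ℝ g) m x (t • s)‖ * ‖s‖ :=
            ContinuousLinearMap.le_opNorm _ _
        _ ≤ M * ‖t • s‖ ^ (m + 1) / (m + 1)! * ‖s‖ := by gcongr; exact ih hg' hlip' (t • s)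
        _ = M * ‖s‖ ^ (m + 2) / (m + 1)! * t ^ (m + 1) := by
            rw [norm_smul, Real.norm_of_nonneg ht]
            ring
    have h := norm_image_one_le_of_norm_deriv_le_mul_pow
      (hasDerivAt_sub_taylorPoly_segment (by exact_mod_cast hg) x s) (by simp) hderiv_le
    convert h using 1
    · simp
    · rw [Nat.factorial_succ (m + 1)]
      push_cast
      field_simp

theorem stmt1 {n : ℕ} (p : ℕ) (hp : 2 ≤ p) (f : EuclideanSpace ℝ (Fin n) → ℝ)
    (L : ℝ) (hL : 0 ≤ L) (hf : ContDiff ℝ (p : ℕ∞) f)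
    (hLip : ∀ x y : EuclideanSpace ℝ (Fin n),
      ‖iteratedFDeriv ℝ p f x - iteratedFDeriv ℝ p f y‖ ≤ ((p - 1).factorial : ℝ) * L * ‖x - y‖) :
    ∀ x s : EuclideanSpace ℝ (Fin n),
      ‖gradient f (x + s) - gradient (fun s' => taylorP p f x s') s‖ ≤ L * ‖s‖ ^ p := by
  obtain ⟨q, rfl⟩ : ∃ q, p = q + 1 := ⟨p - 1, by omega⟩
  intro x s
  have htaylor : (fun s' => taylorP (q + 1) f x s') = taylorPoly f (q + 1) x := by
    funext s'
    simp [taylorP, taylorPoly]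
  have hlip : ∀ y z, ‖iteratedFDeriv ℝ q (fderiv ℝ f) y - iteratedFDeriv ℝ q (fderiv ℝ f) z‖
      ≤ (q ! * L) * ‖y - z‖ := fun y z =>
    (norm_iteratedFDeriv_fderiv_sub f q y z).trans_le (by simpa using hLip y z)
  rw [gradient, gradient, htaylor, (hasFDerivAt_taylorPoly (by exact_mod_cast hf) x s).fderiv,
    ← LinearIsometryEquiv.map_sub, LinearIsometryEquiv.norm_map]
  calc _ ≤ q ! * L * ‖s‖ ^ (q + 1) / (q + 1)! :=
        norm_sub_taylorPoly_le (hf.fderiv_right (by norm_cast)) hlip x s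
    _ = L * ‖s‖ ^ (q + 1) / (q + 1) := by
        rw [Nat.factorial_succ]
        push_cast
        field_simp
    _ ≤ L * ‖s‖ ^ (q + 1) := div_le_self (by positivity) (by linarith)
end

section
/- Let f : ℝⁿ → ℝ be p-times continuously differentiable (p ≥ 2) with ‖∇ᵖf(x) − ∇ᵖf(y)‖ ≤ (p−1)!·L·‖x−y‖ for all x, y. Then for all x, s ∈ ℝⁿ, ‖∇²f(x+s) − ∇²_s T_p(x,s)‖ ≤ (p−1)·L·‖s‖^{p−1}, where the norm on symmetric matrices is the operator norm induced by the Euclidean norm. -/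
open scoped BigOperators

/-!
Fix directions `a, b`. Along the segment `t ↦ x + t • s` the functions
`t ↦ D^{r+2} f (x + t s) [s, …, s, a, b]`, `r = 0, …, p - 2`, are successive derivatives of one
another, and the last one moves by at most `(p-1)! L ‖s‖^(p-1) ‖a‖ ‖b‖ · t`. Taylor's theorem
with a Lipschitz top derivative (the mean value inequality, iterated) then bounds
`D²f(x+s)[a,b] - ∑ᵣ D^{r+2} f(x)[s^r, a, b] / r!` by `L ‖s‖^(p-1) ‖a‖ ‖b‖`. Because iterated
derivatives of a `C^p` function are symmetric, the sum is exactly `∇²_s T_p(x,s)[a,b]`, so we even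
get the bound `L ‖s‖^(p-1)`, and `p - 1 ≥ 1`.
-/

open Set Finset Nat Function Equiv

section Symmetry

variable {E F : Type*} [NormedAddCommGroup E] [NormedSpace ℝ E]
  [NormedAddCommGroup F] [NormedSpace ℝ F] {f : E → F}

theorem ContDiff.iteratedFDeriv_comp_swap_zero_one {k : ℕ} (hf : ContDiff ℝ (k + 2) f) (x : E)
    (v : Fin (k + 2) → E) :
    iteratedFDeriv ℝ (k + 2) f x (v ∘ swap 0 1) = iteratedFDeriv ℝ (k + 2) f x v := by
  have key : ∀ w : Fin (k + 2) → E, iteratedFDeriv ℝ (k + 2) f x w =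
      fderiv ℝ (fderiv ℝ (iteratedFDeriv ℝ k f)) x (w 0) (w 1) (Fin.tail (Fin.tail w)) := by
    intro w
    rw [iteratedFDeriv_succ_apply_left, iteratedFDeriv_succ_eq_comp_left,
      LinearIsometryEquiv.comp_fderiv (𝕜 := ℝ)
        (iso := (continuousMultilinearCurryLeftEquiv ℝ (fun _ : Fin (k + 1) ↦ E) F).symm)
        (f := fderiv ℝ (iteratedFDeriv ℝ k f)) (x := x)]
    rfl
  have hsymm : IsSymmSndFDerivAt ℝ (iteratedFDeriv ℝ k f) x :=
    (hf.iteratedFDeriv_right (m := 2) (i := k) (by norm_cast; omega)).contDiffAt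
      |>.isSymmSndFDerivAt (by simp)
  have htail : Fin.tail (Fin.tail (v ∘ swap 0 1)) = Fin.tail (Fin.tail v) := by
    ext i
    simp [Fin.tail, swap_apply_of_ne_of_ne, Fin.ext_iff]
  rw [key, key, htail, comp_apply, comp_apply, swap_apply_left, swap_apply_right, hsymm.eq]

theorem apply_comp_perm_eq_of_swap_castSucc_succ {α β : Type*} {n : ℕ}
    (g : (Fin (n + 1) → α) → β)
    (h : ∀ (i : Fin n) (v : Fin (n + 1) → α), g (v ∘ swap i.castSucc i.succ) = g v)
    (σ : Perm (Fin (n + 1))) (v : Fin (n + 1) → α) : g (v ∘ σ) = g v := by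
  have hσ : σ ∈ Submonoid.closure (Set.range fun i : Fin n ↦ swap i.castSucc i.succ) := by
    rw [Perm.mclosure_swap_castSucc_succ]; exact Submonoid.mem_top σ
  induction hσ using Submonoid.closure_induction generalizing v with
  | mem τ hτ => obtain ⟨i, rfl⟩ := hτ; exact h i v
  | one => rfl
  | mul τ ρ _ _ hτ hρ => exact (hρ (v ∘ τ)).trans (hτ v)

theorem ContDiff.iteratedFDeriv_comp_perm {k : ℕ} (hf : ContDiff ℝ k f) (x : E)
    (σ : Perm (Fin k)) (v : Fin k → E) :
    iteratedFDeriv ℝ k f x (v ∘ σ) = iteratedFDeriv ℝ k f x v := by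
  induction k generalizing x with
  | zero => exact congrArg _ (Subsingleton.elim _ _)
  | succ k ih =>
    -- The first adjacent swap is Schwarz's theorem for a lower derivative; any later one acts
    -- inside one more derivative of `D^k f`, where the induction hypothesis applies.
    refine apply_comp_perm_eq_of_swap_castSucc_succ _ (fun i w ↦ ?_) σ v
    rcases k with _ | k
    · exact i.elim0
    cases i using Fin.cases with
    | zero => exact hf.iteratedFDeriv_comp_swap_zero_one x w
    | succ j =>
      have hdiff : DifferentiableAt ℝ (iteratedFDeriv ℝ (k + 1) f) x :=
        hf.differentiable_iteratedFDeriv (by norm_cast; omega) x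
      have h0 : (w ∘ swap j.succ.castSucc j.succ.succ) 0 = w 0 := by
        simp [swap_apply_of_ne_of_ne, Fin.ext_iff]
      have htail : Fin.tail (w ∘ swap j.succ.castSucc j.succ.succ) =
          Fin.tail w ∘ swap j.castSucc j.succ := by
        ext l
        simp [Fin.tail, (Fin.succ_injective _).swap_apply]
      rw [hdiff.iteratedFDeriv_succ_apply_left', hdiff.iteratedFDeriv_succ_apply_left', h0, htail]
      simp_rw [ih (hf.of_le (by norm_cast; omega))]

end Symmetry

theorem Fin.update_const_eq_cons_comp_swap {α : Type*} {k : ℕ} (y u : α) (i : Fin (k + 1)) :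
    update (fun _ ↦ y) i u = Fin.cons u (fun _ : Fin k ↦ y) ∘ swap 0 i := by
  have hy : (Fin.cons y fun _ ↦ y : Fin (k + 1) → α) = fun _ ↦ y :=
    Fin.cons_self_tail (fun _ ↦ y : Fin (k + 1) → α)
  rw [← Fin.update_cons_zero y, hy, update_comp_equiv, symm_swap, swap_apply_left]
  rfl

theorem Fin.cons_comp_perm {α : Type*} {k : ℕ} (u : α) (v : Fin k → α) (σ : Perm (Fin k)) :
    Fin.cons u (v ∘ σ) = Fin.cons u v ∘ Perm.decomposeFin.symm (0, σ) := by
  ext i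
  cases i using Fin.cases <;> simp [Perm.decomposeFin_symm_apply_succ]

namespace ContinuousMultilinearMap

variable {𝕜 E F : Type*} [NontriviallyNormedField 𝕜] [NormedAddCommGroup E] [NormedSpace 𝕜 E]
  [NormedAddCommGroup F] [NormedSpace 𝕜 F] {k : ℕ}

theorem hasFDerivAt_apply_diag (M : E [×k + 1]→L[𝕜] F)
    (hM : ∀ (σ : Perm (Fin (k + 1))) v, M (v ∘ σ) = M v) (y : E) :
    HasFDerivAt (fun z ↦ M fun _ ↦ z) ((k + 1) • M.curryLeft.flipMultilinear fun _ ↦ y) y := by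
  refine ((M.hasFDerivAt fun _ ↦ y).comp y
    (ContinuousLinearMap.pi fun _ ↦ ContinuousLinearMap.id 𝕜 E).hasFDerivAt).congr_fderiv ?_
  ext u
  simp [linearDeriv_apply, Fin.update_const_eq_cons_comp_swap, hM]

theorem curryLeft_flipMultilinear_comp_perm (M : E [×k + 1]→L[𝕜] F)
    (hM : ∀ (σ : Perm (Fin (k + 1))) v, M (v ∘ σ) = M v) (σ : Perm (Fin k)) (v : Fin k → E) :
    M.curryLeft.flipMultilinear (v ∘ σ) = M.curryLeft.flipMultilinear v := by
  ext u
  simp [Fin.cons_comp_perm, hM]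

theorem iteratedFDeriv_two_apply_diag (M : E [×k + 2]→L[𝕜] F)
    (hM : ∀ (σ : Perm (Fin (k + 2))) v, M (v ∘ σ) = M v) (s : E) (m : Fin 2 → E) :
    iteratedFDeriv 𝕜 2 (fun z ↦ M fun _ ↦ z) s m =
      ((k + 2) * (k + 1)) • M (Fin.cons (m 1) (Fin.cons (m 0) fun _ ↦ s)) := by
  have hfderiv : fderiv 𝕜 (fun z ↦ M fun _ ↦ z) =
      fun y ↦ (k + 2) • M.curryLeft.flipMultilinear fun _ ↦ y :=
    funext fun y ↦ (hasFDerivAt_apply_diag M hM y).fderiv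
  have hsecond : HasFDerivAt (fun y ↦ (k + 2) • M.curryLeft.flipMultilinear fun _ ↦ y)
      ((k + 2) • (k + 1) • M.curryLeft.flipMultilinear.curryLeft.flipMultilinear fun _ ↦ s) s :=
    (hasFDerivAt_apply_diag _ (curryLeft_flipMultilinear_comp_perm M hM) s).const_smul (k + 2)
  rw [iteratedFDeriv_two_apply, hfderiv, hsecond.fderiv]
  simp [smul_smul]

theorem iteratedFDeriv_two_diag_eq_zero_of_lt_two {j : ℕ} (hj : j < 2) (M : E [×j]→L[𝕜] F) :
    iteratedFDeriv 𝕜 2 (fun z ↦ M fun _ ↦ z) = 0 := by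
  interval_cases j
  · have hconst : (fun z : E ↦ M fun _ ↦ z) = fun _ ↦ M 0 :=
      funext fun z ↦ congrArg M (Subsingleton.elim _ _)
    rw [hconst]
    exact iteratedFDeriv_const_of_ne (𝕜 := 𝕜) two_ne_zero _
  · have hfderiv : fderiv 𝕜 (fun z ↦ M fun _ ↦ z) = fun _ ↦ M.curryLeft.flipMultilinear 0 := by
      refine funext fun y ↦ ((hasFDerivAt_apply_diag M (fun σ v ↦ ?_) y).fderiv).trans ?_
      · rw [Subsingleton.elim (α := Perm (Fin 1)) σ 1]; rfl
      · simp [Subsingleton.elim (fun _ : Fin 0 ↦ y) 0]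
    ext s m
    simp [iteratedFDeriv_two_apply, hfderiv]

end ContinuousMultilinearMap

section DiagArgs

variable {α : Type*}

def diagArgs (r : ℕ) (s a b : α) : Fin (r + 2) → α :=
  Fin.snoc (Fin.snoc (fun _ : Fin r ↦ s) a) b

theorem cons_diagArgs (r : ℕ) (s a b : α) :
    Fin.cons s (diagArgs r s a b) = diagArgs (r + 1) s a b := by
  have hconst : (Fin.cons s fun _ : Fin r ↦ s : Fin (r + 1) → α) = fun _ ↦ s :=
    Fin.cons_self_tail (fun _ ↦ s : Fin (r + 1) → α)
  rw [diagArgs, Fin.cons_snoc_eq_snoc_cons, Fin.cons_snoc_eq_snoc_cons, hconst, diagArgs]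

theorem cons_cons_comp_rev_eq_diagArgs (r : ℕ) (s a b : α) :
    Fin.cons b (Fin.cons a fun _ : Fin r ↦ s) ∘ Fin.rev = diagArgs r s a b := by
  rw [Fin.cons_comp_rev, Fin.cons_comp_rev]
  rfl

theorem diagArgs_zero (s : α) (m : Fin 2 → α) : diagArgs 0 s (m 0) (m 1) = m := by
  ext i
  fin_cases i <;> rfl

theorem prod_norm_diagArgs {E : Type*} [SeminormedAddGroup E] (r : ℕ) (s a b : E) :
    ∏ i, ‖diagArgs r s a b i‖ = ‖s‖ ^ r * ‖a‖ * ‖b‖ := by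
  simp [diagArgs, Fin.prod_univ_castSucc]

end DiagArgs

section LineTaylor

variable {E F : Type*} [NormedAddCommGroup E] [NormedSpace ℝ E]
  [NormedAddCommGroup F] [NormedSpace ℝ F]

theorem hasDerivAt_pow_succ_div_factorial (i : ℕ) (τ : ℝ) :
    HasDerivAt (fun t : ℝ ↦ t ^ (i + 1) / (i + 1)!) (τ ^ i / i !) τ := by
  refine ((hasDerivAt_pow (i + 1) τ).div_const ((i + 1)! : ℝ)).congr_deriv ?_
  rw [Nat.factorial_succ, Nat.cast_mul, Nat.add_sub_cancel]
  field_simp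

theorem norm_sub_taylor_sum_le_of_hasDerivAt {k : ℕ} {g : ℕ → ℝ → F} {C : ℝ}
    (hg : ∀ i < k, ∀ t, HasDerivAt (g i) (g (i + 1) t) t)
    (hk : ∀ t ∈ Icc (0 : ℝ) 1, ‖g k t - g k 0‖ ≤ C * t) {t : ℝ} (ht : t ∈ Icc (0 : ℝ) 1) :
    ‖g 0 t - ∑ i ∈ range (k + 1), (t ^ i / i !) • g i 0‖ ≤ C * t ^ (k + 1) / (k + 1)! := by
  induction k generalizing g t with
  | zero => simpa using hk t ht
  | succ k ih =>
    have hpoly : ∀ τ : ℝ, HasDerivAt (fun t : ℝ ↦ ∑ i ∈ range (k + 2), (t ^ i / i !) • g i 0)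
        (∑ i ∈ range (k + 1), (τ ^ i / i !) • g (i + 1) 0) τ := by
      intro τ
      simp_rw [sum_range_succ' _ (k + 1)]
      simpa using HasDerivAt.fun_sum fun i _ ↦
        (hasDerivAt_pow_succ_div_factorial i τ).smul_const (g (i + 1) 0)
    have hB : ∀ τ : ℝ, HasDerivAt (fun t ↦ C * (t ^ (k + 2) / (k + 2)!))
        (C * (τ ^ (k + 1) / (k + 1)!)) τ :=
      fun τ ↦ (hasDerivAt_pow_succ_div_factorial (k + 1) τ).const_mul C
    have key := image_norm_le_of_norm_deriv_right_le_deriv_boundary (a := 0) (b := 1)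
      (fun τ _ ↦ ((hg 0 (by omega) τ).sub (hpoly τ)).continuousAt.continuousWithinAt)
      (fun τ _ ↦ ((hg 0 (by omega) τ).sub (hpoly τ)).hasDerivWithinAt)
      (by simp [sum_range_succ']) hB
      (fun τ hτ ↦ by
        simpa [mul_div_assoc] using ih (g := fun i ↦ g (i + 1))
          (fun i hi ↦ hg (i + 1) (by omega)) hk (Ico_subset_Icc_self hτ))
      ht
    simpa [mul_div_assoc] using key

theorem hasDerivAt_iteratedFDeriv_add_smul {n : ℕ} {f : E → F}
    (hf : Differentiable ℝ (iteratedFDeriv ℝ n f)) (x s : E) (w : Fin n → E) (t : ℝ) :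
    HasDerivAt (fun τ : ℝ ↦ iteratedFDeriv ℝ n f (x + τ • s) w)
      (iteratedFDeriv ℝ (n + 1) f (x + t • s) (Fin.cons s w)) t := by
  have hline : HasDerivAt (fun τ : ℝ ↦ x + τ • s) s t := by
    simpa using ((hasDerivAt_id t).smul_const s).const_add x
  exact (ContinuousMultilinearMap.apply ℝ (fun _ : Fin n ↦ E) F w).hasFDerivAt.comp_hasDerivAt t
    ((hf _).hasFDerivAt.comp_hasDerivAt t hline)

theorem norm_iteratedFDeriv_two_sub_taylor_sum_le (P : ℕ) {f : E → F} {L : ℝ}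
    (hf : ContDiff ℝ (P + 2) f)
    (hLip : ∀ y z, ‖iteratedFDeriv ℝ (P + 2) f y - iteratedFDeriv ℝ (P + 2) f z‖ ≤
      (P + 1)! * L * ‖y - z‖)
    (x s a b : E) :
    ‖iteratedFDeriv ℝ 2 f (x + s) (diagArgs 0 s a b) -
        ∑ r ∈ range (P + 1), (r ! : ℝ)⁻¹ • iteratedFDeriv ℝ (r + 2) f x (diagArgs r s a b)‖ ≤
      L * ‖s‖ ^ (P + 1) * ‖a‖ * ‖b‖ := by
  set g : ℕ → ℝ → F := fun i t ↦ iteratedFDeriv ℝ (i + 2) f (x + t • s) (diagArgs i s a b)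
  have hg : ∀ i < P, ∀ t, HasDerivAt (g i) (g (i + 1) t) t := by
    intro i hi t
    show HasDerivAt (g i) (iteratedFDeriv ℝ (i + 1 + 2) f (x + t • s) (diagArgs (i + 1) s a b)) t
    rw [← cons_diagArgs]
    exact hasDerivAt_iteratedFDeriv_add_smul
      (hf.differentiable_iteratedFDeriv (by norm_cast; omega)) x s _ t
  have hlast : ∀ t ∈ Icc (0 : ℝ) 1,
      ‖g P t - g P 0‖ ≤ ((P + 1)! * L * ‖s‖ ^ (P + 1) * ‖a‖ * ‖b‖) * t := by
    intro t ht
    calc ‖g P t - g P 0‖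
        ≤ ‖iteratedFDeriv ℝ (P + 2) f (x + t • s) -
              iteratedFDeriv ℝ (P + 2) f (x + (0 : ℝ) • s)‖ * ∏ i, ‖diagArgs P s a b i‖ := by
          rw [← sub_apply]
          exact ContinuousMultilinearMap.le_opNorm _ _
      _ ≤ ((P + 1)! * L * (t * ‖s‖)) * (‖s‖ ^ P * ‖a‖ * ‖b‖) := by
        rw [prod_norm_diagArgs]
        gcongr
        simpa [norm_smul, abs_of_nonneg ht.1] using hLip (x + t • s) (x + (0 : ℝ) • s)
      _ = _ := by ring
  have key := norm_sub_taylor_sum_le_of_hasDerivAt hg hlast (t := 1) (by simp)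
  simp only [g, one_smul, zero_smul, add_zero, one_pow, one_div] at key
  refine key.trans_eq ?_
  field_simp

end LineTaylor

section TaylorPolynomial

variable {n : ℕ}

theorem iteratedFDeriv_two_taylorP_apply (P : ℕ) {f : EuclideanSpace ℝ (Fin n) → ℝ}
    (hf : ContDiff ℝ (P + 2) f) (x s : EuclideanSpace ℝ (Fin n))
    (m : Fin 2 → EuclideanSpace ℝ (Fin n)) :
    iteratedFDeriv ℝ 2 (fun s' ↦ taylorP (P + 2) f x s') s m =
      ∑ r ∈ range (P + 1),
        (r ! : ℝ)⁻¹ • iteratedFDeriv ℝ (r + 2) f x (diagArgs r s (m 0) (m 1)) := by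
  have hsymm : ∀ j ≤ P + 2, ∀ (σ : Perm (Fin j)) v,
      iteratedFDeriv ℝ j f x (v ∘ σ) = iteratedFDeriv ℝ j f x v :=
    fun j hj ↦ (hf.of_le (by norm_cast)).iteratedFDeriv_comp_perm x
  have hdiag : ∀ j, ContDiff ℝ 2 fun s' ↦ iteratedFDeriv ℝ j f x fun _ ↦ s' :=
    fun j ↦ (iteratedFDeriv ℝ j f x).contDiff.comp (contDiff_pi.2 fun _ ↦ contDiff_id)
  have hT : (fun s' ↦ taylorP (P + 2) f x s') = fun s' ↦
      ∑ j ∈ range (P + 2 + 1), (j ! : ℝ)⁻¹ • iteratedFDeriv ℝ j f x fun _ ↦ s' := by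
    simp [taylorP]
  rw [hT, iteratedFDeriv_fun_sum_apply fun j _ ↦ ((hdiag j).const_smul _).contDiffAt,
    _root_.sum_apply, sum_range_succ', sum_range_succ']
  have hterm : ∀ j,
      iteratedFDeriv ℝ 2 (fun s' ↦ (j ! : ℝ)⁻¹ • iteratedFDeriv ℝ j f x fun _ ↦ s') s =
        (j ! : ℝ)⁻¹ • iteratedFDeriv ℝ 2 (fun s' ↦ iteratedFDeriv ℝ j f x fun _ ↦ s') s :=
    fun j ↦ iteratedFDeriv_const_smul_apply' (hdiag j).contDiffAt
  simp only [zero_add, hterm,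
    ContinuousMultilinearMap.iteratedFDeriv_two_diag_eq_zero_of_lt_two one_lt_two,
    ContinuousMultilinearMap.iteratedFDeriv_two_diag_eq_zero_of_lt_two two_pos, Pi.zero_apply,
    smul_zero, zero_apply, add_zero]
  refine Finset.sum_congr rfl fun r hr ↦ ?_
  have hle : r + 2 ≤ P + 2 := by simp at hr; omega
  -- The monomial's Hessian puts its arguments as `(b, a, s, …, s)`; reverse them.
  have hrev : Fin.cons (m 1) (Fin.cons (m 0) fun _ : Fin r ↦ s) ∘ Fin.revPerm =
      diagArgs r s (m 0) (m 1) :=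
    cons_cons_comp_rev_eq_diagArgs r s _ _
  rw [smul_apply, ContinuousMultilinearMap.iteratedFDeriv_two_apply_diag _ (hsymm _ hle),
    ← hsymm _ hle Fin.revPerm, hrev, ← Nat.cast_smul_eq_nsmul ℝ, smul_smul]
  congr 1
  rw [Nat.factorial_succ, Nat.factorial_succ]
  push_cast
  field_simp
  ring

theorem norm_iteratedFDeriv_two_sub_taylorP_le (P : ℕ) {f : EuclideanSpace ℝ (Fin n) → ℝ}
    {L : ℝ} (hL : 0 ≤ L) (hf : ContDiff ℝ (P + 2) f)
    (hLip : ∀ y z, ‖iteratedFDeriv ℝ (P + 2) f y - iteratedFDeriv ℝ (P + 2) f z‖ ≤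
      (P + 1)! * L * ‖y - z‖)
    (x s : EuclideanSpace ℝ (Fin n)) :
    ‖iteratedFDeriv ℝ 2 f (x + s) - iteratedFDeriv ℝ 2 (fun s' ↦ taylorP (P + 2) f x s') s‖ ≤
      L * ‖s‖ ^ (P + 1) := by
  refine ContinuousMultilinearMap.opNorm_le_bound (by positivity) fun m ↦ ?_
  have h := norm_iteratedFDeriv_two_sub_taylor_sum_le P hf hLip x s (m 0) (m 1)
  rw [diagArgs_zero, ← iteratedFDeriv_two_taylorP_apply P hf] at h
  rwa [sub_apply, Fin.prod_univ_two, ← mul_assoc]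

end TaylorPolynomial

theorem stmt2 {n : ℕ} (p : ℕ) (hp : 2 ≤ p) (f : EuclideanSpace ℝ (Fin n) → ℝ)
    (L : ℝ) (hL : 0 ≤ L) (hf : ContDiff ℝ (p : ℕ∞) f)
    (hLip : ∀ x y : EuclideanSpace ℝ (Fin n),
      ‖iteratedFDeriv ℝ p f x - iteratedFDeriv ℝ p f y‖ ≤ ((p - 1).factorial : ℝ) * L * ‖x - y‖) :
    ∀ x s : EuclideanSpace ℝ (Fin n),
      ‖iteratedFDeriv ℝ 2 f (x + s) - iteratedFDeriv ℝ 2 (fun s' => taylorP p f x s') s‖ ≤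
        ((p : ℝ) - 1) * L * ‖s‖ ^ (p - 1) := by
  intro x s
  obtain ⟨P, rfl⟩ : ∃ P, p = P + 2 := ⟨p - 2, by omega⟩
  have hf' : ContDiff ℝ (P + 2) f := by exact_mod_cast hf
  calc _ ≤ L * ‖s‖ ^ (P + 1) :=
        norm_iteratedFDeriv_two_sub_taylorP_le P hL hf' (by simpa using hLip) x s
    _ ≤ ((P + 2 : ℕ) - 1 : ℝ) * (L * ‖s‖ ^ (P + 2 - 1)) :=
        le_mul_of_one_le_left (by positivity) (by push_cast; linarith [P.cast_nonneg (α := ℝ)])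
    _ = _ := by ring
end

section
/- Suppose f(x+s) ≤ T_p(x,s) + (L/p)‖s‖^{p+1} and T_p(x,0) − T_p(x,s) ≥ (σ/(p+1))‖s‖^{p+1} > 0, and also T_p(x,s) ≤ f(x+s) + (L/p)‖s‖^{p+1}. Define ρ = (f(x) − f(x+s))/(T_p(x,0) − T_p(x,s)). Then |ρ − 1| ≤ L(p+1)/(p·σ). In particular, if σ ≥ L(p+1)/(p(1−η₂)) for some η₂ ∈ (0,1), then ρ ≥ η₂. -/
/-! The model decrease `T_p(x,0) - T_p(x,s)` differs from the actual decrease `f x - f (x+s)`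
by the Taylor error `T_p(x,s) - f (x+s)`, which is at most `(L/p)‖s‖^{p+1}`, while the model
decrease is at least `(σ/(p+1))‖s‖^{p+1}`; the ratio of these two bounds is `L(p+1)/(pσ)`. -/

open scoped BigOperators

lemma taylorP_zero {n : ℕ} (p : ℕ) (f : EuclideanSpace ℝ (Fin n) → ℝ)
    (x : EuclideanSpace ℝ (Fin n)) : taylorP p f x 0 = f x := by
  rw [taylorP, Finset.sum_eq_single 0]
  · simp
  · intro j _ hj
    have : Nonempty (Fin j) := ⟨⟨0, Nat.pos_of_ne_zero hj⟩⟩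
    have h0 : iteratedFDeriv ℝ j f x (fun _ => 0) = 0 :=
      (iteratedFDeriv ℝ j f x).map_coord_zero (Classical.arbitrary (Fin j)) rfl
    simp [h0]
  · simp

lemma abs_div_sub_one_le_of_abs_sub_le {a d c e : ℝ} (hc : 0 < c) (hcd : c ≤ d)
    (h : |a - d| ≤ e) : |a / d - 1| ≤ e / c := by
  have hd : 0 < d := hc.trans_le hcd
  calc |a / d - 1| = |a - d| / d := by
        rw [div_sub_one hd.ne', abs_div, abs_of_pos hd]
    _ ≤ e / c := div_le_div₀ ((abs_nonneg _).trans h) h hc hcd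

lemma div_le_one_sub_of_div_one_sub_le {c σ η : ℝ} (hσ : 0 < σ) (hη : η < 1)
    (h : c / (1 - η) ≤ σ) : c / σ ≤ 1 - η := by
  rw [div_le_iff₀ (sub_pos.2 hη)] at h
  rwa [div_le_iff₀ hσ, mul_comm]

theorem stmt6_general {n : ℕ} (p : ℕ) (f : EuclideanSpace ℝ (Fin n) → ℝ)
    (x s : EuclideanSpace ℝ (Fin n)) (L σ : ℝ)
    (hub : f (x + s) ≤ taylorP p f x s + L / p * ‖s‖ ^ (p + 1))
    (hlb : taylorP p f x s ≤ f (x + s) + L / p * ‖s‖ ^ (p + 1))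
    (hdec : taylorP p f x 0 - taylorP p f x s ≥ σ / ((p : ℝ) + 1) * ‖s‖ ^ (p + 1))
    (hpos : 0 < σ / ((p : ℝ) + 1) * ‖s‖ ^ (p + 1)) :
    |(f x - f (x + s)) / (taylorP p f x 0 - taylorP p f x s) - 1| ≤
        L * ((p : ℝ) + 1) / ((p : ℝ) * σ) ∧
      ∀ η₂ : ℝ, 0 < η₂ → η₂ < 1 → σ ≥ L * ((p : ℝ) + 1) / ((p : ℝ) * (1 - η₂)) →
        (f x - f (x + s)) / (taylorP p f x 0 - taylorP p f x s) ≥ η₂ := by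
  have hr : ‖s‖ ^ (p + 1) ≠ 0 := by rintro h; simp [h] at hpos
  have hσ : 0 < σ := by
    have : (0 : ℝ) < (p : ℝ) + 1 := by positivity
    exact (div_pos_iff_of_pos_right this).1 (pos_of_mul_pos_left hpos (by positivity))
  have herr : |(f x - f (x + s)) - (taylorP p f x 0 - taylorP p f x s)| ≤
      L / p * ‖s‖ ^ (p + 1) := by
    rw [taylorP_zero, abs_le]
    constructor <;> linarith
  have hρ := abs_div_sub_one_le_of_abs_sub_le hpos hdec herr
  -- valid also at `p = 0`, where both sides are `0` by `x / 0 = 0`, so no `field_simp`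
  have hratio : L / p * ‖s‖ ^ (p + 1) / (σ / ((p : ℝ) + 1) * ‖s‖ ^ (p + 1)) =
      L * ((p : ℝ) + 1) / ((p : ℝ) * σ) := by
    rw [mul_div_mul_right _ _ hr]
    simp only [div_eq_mul_inv, mul_inv, inv_inv]
    ring
  rw [hratio] at hρ
  refine ⟨hρ, fun η₂ _ hη₂ hση => ?_⟩
  have hb : L * ((p : ℝ) + 1) / ((p : ℝ) * σ) ≤ 1 - η₂ := by
    rw [div_mul_eq_div_div] at hση ⊢
    exact div_le_one_sub_of_div_one_sub_le hσ hη₂ hση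
  linarith [(abs_le.1 (hρ.trans hb)).1]

theorem stmt6 {n : ℕ} (p : ℕ) (hp : 2 ≤ p) (f : EuclideanSpace ℝ (Fin n) → ℝ)
    (x s : EuclideanSpace ℝ (Fin n)) (L σ : ℝ) (hL : 0 ≤ L) (hσ : 0 < σ)
    (hub : f (x + s) ≤ taylorP p f x s + L / p * ‖s‖ ^ (p + 1))
    (hlb : taylorP p f x s ≤ f (x + s) + L / p * ‖s‖ ^ (p + 1))
    (hdec : taylorP p f x 0 - taylorP p f x s ≥ σ / ((p : ℝ) + 1) * ‖s‖ ^ (p + 1))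
    (hpos : 0 < σ / ((p : ℝ) + 1) * ‖s‖ ^ (p + 1)) :
    |(f x - f (x + s)) / (taylorP p f x 0 - taylorP p f x s) - 1| ≤
        L * ((p : ℝ) + 1) / ((p : ℝ) * σ) ∧
      ∀ η₂ : ℝ, 0 < η₂ → η₂ < 1 → σ ≥ L * ((p : ℝ) + 1) / ((p : ℝ) * (1 - η₂)) →
        (f x - f (x + s)) / (taylorP p f x 0 - taylorP p f x s) ≥ η₂ :=
  stmt6_general p f x s L σ hub hlb hdec hpos
end

section
/- Consider the adaptive regularization parameter update: σ_{j+1} ≥ γ₁·σ_j if iteration j is successful, and σ_{j+1} ≥ γ₂·σ_j if iteration j is unsuccessful, where 0 < γ₁ < 1 < γ₂. If additionally σ_j ≤ σ_max for all j ≤ k, then k+1 ≤ |S_k|·(1 + |log γ₁|/log γ₂) + (1/log γ₂)·log(σ_max/σ₀), where S_k is the set of successful iteration indices among 0,…,k and σ₀ > 0 is the initial value. -/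
/-- Bound on the total number of iterations in terms of the number of successful ones,
for the adaptive regularization parameter update. -/
theorem stmt7 (σ : ℕ → ℝ) (success : ℕ → Prop) [DecidablePred success]
    (γ₁ γ₂ σmax : ℝ) (hγ₁ : 0 < γ₁) (hγ₁1 : γ₁ < 1) (hγ₂ : 1 < γ₂)
    (hσpos : ∀ j, 0 < σ j)
    (hupS : ∀ j, success j → γ₁ * σ j ≤ σ (j + 1))
    (hupU : ∀ j, ¬success j → γ₂ * σ j ≤ σ (j + 1))
    (hbound : ∀ j, σ j ≤ σmax) (k : ℕ) :
    ((k : ℝ) + 1) ≤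
      ((Finset.range (k + 1)).filter success).card *
          (1 + |Real.log γ₁| / Real.log γ₂) +
        (1 / Real.log γ₂) * Real.log (σmax / σ 0) := by
  have hγ₂0 : (0:ℝ) < γ₂ := lt_trans one_pos hγ₂
  -- key inductive bound
  have key : ∀ n, σ 0 * γ₁ ^ ((Finset.range (n+1)).filter success).card *
      γ₂ ^ ((Finset.range (n+1)).filter (fun j => ¬ success j)).card ≤ σ (n+1) := by
    intro n
    induction n with
    | zero =>
        by_cases h0 : success 0
        · simp [Finset.filter_singleton, h0]
          calc σ 0 * γ₁ = γ₁ * σ 0 := by ring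
            _ ≤ σ 1 := hupS 0 h0
        · simp [Finset.filter_singleton, h0]
          calc σ 0 * γ₂ = γ₂ * σ 0 := by ring
            _ ≤ σ 1 := hupU 0 h0
    | succ n ih =>
        have hnm : (n+1) ∉ Finset.range (n+1) := by simp
        rw [show n+1+1 = (n+1)+1 from rfl, Finset.range_add_one, Finset.filter_insert,
          Finset.filter_insert]
        by_cases h : success (n+1)
        · rw [if_pos h, if_neg (not_not_intro h),
            Finset.card_insert_of_notMem (by simp : (n+1) ∉ (Finset.range (n+1)).filter success)]
          calc σ 0 * γ₁ ^ (((Finset.range (n+1)).filter success).card + 1) *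
                γ₂ ^ ((Finset.range (n+1)).filter (fun j => ¬ success j)).card
              = γ₁ * (σ 0 * γ₁ ^ ((Finset.range (n+1)).filter success).card *
                γ₂ ^ ((Finset.range (n+1)).filter (fun j => ¬ success j)).card) := by ring
            _ ≤ γ₁ * σ (n+1) := by
                exact mul_le_mul_of_nonneg_left ih (le_of_lt hγ₁)
            _ ≤ σ (n+1+1) := hupS (n+1) h
        · rw [if_neg h, if_pos h,
            Finset.card_insert_of_notMem
              (by simp : (n+1) ∉ (Finset.range (n+1)).filter (fun j => ¬ success j))]
          calc σ 0 * γ₁ ^ ((Finset.range (n+1)).filter success).card *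
                γ₂ ^ (((Finset.range (n+1)).filter (fun j => ¬ success j)).card + 1)
              = γ₂ * (σ 0 * γ₁ ^ ((Finset.range (n+1)).filter success).card *
                γ₂ ^ ((Finset.range (n+1)).filter (fun j => ¬ success j)).card) := by ring
            _ ≤ γ₂ * σ (n+1) := by
                exact mul_le_mul_of_nonneg_left ih (le_of_lt hγ₂0)
            _ ≤ σ (n+1+1) := hupU (n+1) h
  set S := ((Finset.range (k+1)).filter success).card with hS
  set U := ((Finset.range (k+1)).filter (fun j => ¬ success j)).card with hU
  have hcard : S + U = k + 1 := by
    rw [hS, hU]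
    rw [Finset.card_filter_add_card_filter_not, Finset.card_range]
  have h1 : σ 0 * γ₁ ^ S * γ₂ ^ U ≤ σmax := le_trans (key k) (hbound (k+1))
  have hσ0 : 0 < σ 0 := hσpos 0
  have hmaxpos : 0 < σmax := lt_of_lt_of_le hσ0 (hbound 0)
  have hlog : Real.log (σ 0) + S * Real.log γ₁ + U * Real.log γ₂ ≤ Real.log σmax := by
    have := Real.log_le_log (by positivity) h1
    rwa [Real.log_mul (by positivity) (by positivity),
      Real.log_mul (by positivity) (by positivity), Real.log_pow, Real.log_pow] at this
  have hlγ₂ : 0 < Real.log γ₂ := Real.log_pos hγ₂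
  have hlγ₁ : Real.log γ₁ < 0 := Real.log_neg hγ₁ hγ₁1
  rw [abs_of_neg hlγ₁, Real.log_div (ne_of_gt hmaxpos) (ne_of_gt hσ0)]
  have hkSU : (k:ℝ) + 1 = (S:ℝ) + U := by
    have h' : ((S + U : ℕ) : ℝ) = ((k + 1 : ℕ) : ℝ) := by rw [hcard]
    push_cast at h'
    linarith
  rw [hkSU, ← sub_nonneg]
  have expand : (S:ℝ) * (1 + -Real.log γ₁ / Real.log γ₂) +
      1 / Real.log γ₂ * (Real.log σmax - Real.log (σ 0)) - ((S:ℝ) + U) =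
      (Real.log σmax - (Real.log (σ 0) + S * Real.log γ₁ + U * Real.log γ₂)) / Real.log γ₂ := by
    field_simp
    ring
  rw [expand]
  exact div_nonneg (by linarith) (le_of_lt hlγ₂)
end
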